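/- arXiv:1010.6206 — 2 statements merged into one kernel-verified Lean document; each statement's English description precedes it below -/
import Mathlib

section
/- If a positive odd integer a satisfies f^k(a) = a for some k ≥ 1, and n_i = v_2(3 f^{i-1}(a)+1) for i = 1,...,k, then 3^k < 2^{n_1+...+n_k}, and consequently 2^{n_1+...+n_k} ≥ 3^k + 1. -/
/-- Shortcut Collatz map on odd integers: f(a) = (3a+1)/2^(v2(3a+1)). -/
def collatzOdd (a : ℤ) : ℤ := (3 * a + 1) / 2 ^ ((3 * a + 1).natAbs.factorization 2)

/-- n (a) i = v2(3 * f^[i](a) + 1), i.e. the exponent n_{i+1} in the paper. -/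
def collatzExp (a : ℤ) (i : ℕ) : ℕ :=
  (3 * collatzOdd^[i] a + 1).natAbs.factorization 2

/-!
Multiplying the relations `2 ^ nᵢ * aᵢ₊₁ = 3 * aᵢ + 1` along the cycle gives
`2 ^ (n₁ + ⋯ + nₖ) * ∏ aᵢ = ∏ (3 * aᵢ + 1) > 3 ^ k * ∏ aᵢ`, since on a cycle the product
of the `aᵢ₊₁` is that of the `aᵢ` once more; then cancel the positive product `∏ aᵢ`.
-/

open Finset

theorem Finset.prod_range_succ_eq_prod_range_of_eq {M : Type*} [CommMonoid M] (x : ℕ → M)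
    {k : ℕ} (hx : x k = x 0) : ∏ i ∈ range k, x (i + 1) = ∏ i ∈ range k, x i := by
  cases k with
  | zero => simp
  | succ m => rw [prod_range_succ, prod_range_succ', hx]

theorem pow_lt_prod_of_mul_eq_mul_add_one_of_cycle {R : Type*} [CommRing R] [LinearOrder R]
    [IsStrictOrderedRing R] {b : R} {c x : ℕ → R} {k : ℕ} (hb : 0 < b) (hk : k ≠ 0)
    (hx : ∀ i, 0 < x i) (hstep : ∀ i, c i * x (i + 1) = b * x i + 1) (hcyc : x k = x 0) :
    b ^ k < ∏ i ∈ range k, c i := by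
  have hprod : 0 < ∏ i ∈ range k, x i := prod_pos fun i _ => hx i
  refine lt_of_mul_lt_mul_right ?_ hprod.le
  calc b ^ k * ∏ i ∈ range k, x i = ∏ i ∈ range k, b * x i := by
        rw [prod_mul_distrib, prod_const, card_range]
    _ < ∏ i ∈ range k, (b * x i + 1) :=
        prod_lt_prod_of_nonempty (fun i _ => mul_pos hb (hx i)) (fun i _ => lt_add_one _)
          (nonempty_range_iff.mpr hk)
    _ = (∏ i ∈ range k, c i) * ∏ i ∈ range k, x (i + 1) := by
        rw [← prod_mul_distrib]
        exact prod_congr rfl fun i _ => (hstep i).symm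
    _ = (∏ i ∈ range k, c i) * ∏ i ∈ range k, x i := by
        rw [prod_range_succ_eq_prod_range_of_eq x hcyc]

theorem two_pow_mul_collatzOdd (a : ℤ) :
    2 ^ ((3 * a + 1).natAbs.factorization 2) * collatzOdd a = 3 * a + 1 := by
  have hdvd : ((2 ^ (3 * a + 1).natAbs.factorization 2 : ℕ) : ℤ) ∣ 3 * a + 1 :=
    Int.natCast_dvd.mpr (Nat.ordProj_dvd _ 2)
  push_cast at hdvd
  exact Int.mul_ediv_cancel' hdvd

theorem collatzOdd_pos {a : ℤ} (ha : 0 < a) : 0 < collatzOdd a := by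
  have h : 0 < 2 ^ ((3 * a + 1).natAbs.factorization 2) * collatzOdd a := by
    rw [two_pow_mul_collatzOdd]
    omega
  exact pos_of_mul_pos_right h (pow_nonneg zero_le_two _)

theorem iterate_collatzOdd_pos {a : ℤ} (ha : 0 < a) (i : ℕ) : 0 < collatzOdd^[i] a := by
  induction i with
  | zero => exact ha
  | succ i ih => simpa only [Function.iterate_succ_apply'] using collatzOdd_pos ih

theorem collatzOdd_cycle_pow_lt_general (a : ℤ) (hpos : 0 < a) (k : ℕ) (hk : 1 ≤ k)
    (hcyc : collatzOdd^[k] a = a) :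
    (3 : ℤ) ^ k < 2 ^ (∑ i ∈ Finset.range k, collatzExp a i) ∧
      (3 : ℤ) ^ k + 1 ≤ 2 ^ (∑ i ∈ Finset.range k, collatzExp a i) := by
  have hlt : (3 : ℤ) ^ k < 2 ^ (∑ i ∈ range k, collatzExp a i) := by
    rw [← prod_pow_eq_pow_sum]
    refine pow_lt_prod_of_mul_eq_mul_add_one_of_cycle (x := fun i => collatzOdd^[i] a)
      three_pos (by omega) (iterate_collatzOdd_pos hpos) (fun i => ?_) hcyc
    simpa only [collatzExp, Function.iterate_succ_apply'] using two_pow_mul_collatzOdd (collatzOdd^[i] a)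
  exact ⟨hlt, Int.add_one_le_of_lt hlt⟩

theorem collatzOdd_cycle_pow_lt (a : ℤ) (ha : Odd a) (hpos : 0 < a) (k : ℕ) (hk : 1 ≤ k)
    (hcyc : collatzOdd^[k] a = a) :
    (3 : ℤ) ^ k < 2 ^ (∑ i ∈ Finset.range k, collatzExp a i) ∧
      (3 : ℤ) ^ k + 1 ≤ 2 ^ (∑ i ∈ Finset.range k, collatzExp a i) :=
  collatzOdd_cycle_pow_lt_general a hpos k hk hcyc
end

section
/- For each natural number k, the set of cycles of the shortcut Collatz map f of length k consisting of positive odd integers is finite; equivalently, the set of positive odd integers a with f^k(a) = a is finite. -/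
lemma collatzOdd_spec (a : ℤ) (ha : 0 < a) :
    2 ^ ((3 * a + 1).natAbs.factorization 2) * collatzOdd a = 3 * a + 1 ∧
      0 < collatzOdd a := by
  set v := (3 * a + 1).natAbs.factorization 2 with hv
  have hdvdn : 2 ^ v ∣ (3 * a + 1).natAbs := Nat.ordProj_dvd _ 2
  have hdvd : (2 : ℤ) ^ v ∣ 3 * a + 1 := by
    have h := Int.natCast_dvd_natCast.mpr hdvdn
    push_cast at h
    exact (dvd_abs _ _).mp h
  have heq : 2 ^ v * collatzOdd a = 3 * a + 1 := by
    unfold collatzOdd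
    rw [← hv]
    exact Int.mul_ediv_cancel' hdvd
  have h2 : (0 : ℤ) < 2 ^ v := by positivity
  exact ⟨heq, by nlinarith⟩

lemma iter_pos (a : ℤ) (ha : 0 < a) (i : ℕ) : 0 < collatzOdd^[i] a := by
  induction i with
  | zero => exact ha
  | succ n ih =>
    rw [Function.iterate_succ_apply']
    exact (collatzOdd_spec _ ih).2

lemma key (a : ℤ) (ha : 0 < a) (m : ℕ) :
    ∃ c : ℤ, 0 ≤ c ∧ (1 ≤ m → 1 ≤ c) ∧
      c ≤ (m : ℤ) * 3 ^ m * 2 ^ (∑ i ∈ Finset.range m, collatzExp a i) ∧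
      2 ^ (∑ i ∈ Finset.range m, collatzExp a i) * collatzOdd^[m] a = 3 ^ m * a + c := by
  induction m with
  | zero => exact ⟨0, by simp⟩
  | succ m ih =>
    obtain ⟨c, hc0, -, hcb, hce⟩ := ih
    have hpos := iter_pos a ha m
    have hspec := (collatzOdd_spec (collatzOdd^[m] a) hpos).1
    set S := ∑ i ∈ Finset.range m, collatzExp a i with hS
    have hsum : ∑ i ∈ Finset.range (m + 1), collatzExp a i = S + collatzExp a m :=
      Finset.sum_range_succ _ _
    have hSle : (2 : ℤ) ^ S ≤ 2 ^ (S + collatzExp a m) :=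
      pow_le_pow_right₀ (by norm_num) (Nat.le_add_right _ _)
    have h2S : (1 : ℤ) ≤ 2 ^ S := one_le_pow₀ (by norm_num)
    have h3 : (1 : ℤ) ≤ 3 ^ (m + 1) := one_le_pow₀ (by norm_num)
    refine ⟨3 * c + 2 ^ S, by linarith, fun _ => by linarith, ?_, ?_⟩
    · rw [hsum]
      push_cast
      have hcb3 : 3 * c ≤ (m : ℤ) * 3 ^ (m + 1) * 2 ^ S := by
        calc 3 * c ≤ 3 * ((m : ℤ) * 3 ^ m * 2 ^ S) := by linarith
          _ = (m : ℤ) * 3 ^ (m + 1) * 2 ^ S := by rw [pow_succ]; ring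
      have hint1 : (m : ℤ) * 3 ^ (m + 1) * 2 ^ S ≤ (m : ℤ) * 3 ^ (m + 1) * 2 ^ (S + collatzExp a m) :=
        mul_le_mul_of_nonneg_left hSle (by positivity)
      have hint2 : (2 : ℤ) ^ (S + collatzExp a m) ≤ 3 ^ (m + 1) * 2 ^ (S + collatzExp a m) :=
        le_mul_of_one_le_left (by positivity) h3
      nlinarith [hcb3, hint1, hint2, hSle]
    · rw [hsum, pow_add, Function.iterate_succ_apply']
      have hexp : collatzExp a m = (3 * collatzOdd^[m] a + 1).natAbs.factorization 2 := rfl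
      rw [hexp]
      linear_combination (2 : ℤ) ^ S * hspec + 3 * hce + (pow_succ (3:ℤ) m) * a

theorem collatzOdd_cycles_finite (k : ℕ) (hk : 1 ≤ k) :
    {a : ℤ | 0 < a ∧ Odd a ∧ collatzOdd^[k] a = a}.Finite := by
  apply Set.Finite.subset (Set.finite_Icc (1 : ℤ) (2 * (k : ℤ) * 9 ^ k))
  rintro a ⟨ha, -, hcyc⟩
  obtain ⟨c, hc0, hc1, hcb, hce⟩ := key a ha k
  rw [hcyc] at hce
  set S := ∑ i ∈ Finset.range k, collatzExp a i with hS
  have hc1' := hc1 hk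
  have h2S : (1 : ℤ) ≤ 2 ^ S := one_le_pow₀ (by norm_num)
  have h9 : (9 : ℤ) ^ k = 3 ^ k * 3 ^ k := by rw [← mul_pow]; norm_num
  have hk' : (1 : ℤ) ≤ (k : ℤ) := by exact_mod_cast hk
  have h3 : (1 : ℤ) ≤ 3 ^ k := one_le_pow₀ (by norm_num)
  have hgt : (3 : ℤ) ^ k < 2 ^ S := by
    by_contra h
    push_neg at h
    have := mul_nonneg ha.le (sub_nonneg.mpr h)
    nlinarith
  constructor
  · linarith
  by_cases hcase : (2 : ℤ) ^ S ≤ 2 * 3 ^ k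
  · have hac : a ≤ c := by
      nlinarith [mul_nonneg ha.le (show (0:ℤ) ≤ 2 ^ S - 3 ^ k - 1 by linarith)]
    have hmid : c ≤ (k : ℤ) * 3 ^ k * (2 * 3 ^ k) := by
      nlinarith [mul_nonneg (show (0:ℤ) ≤ (k : ℤ) * 3 ^ k by positivity)
        (show (0:ℤ) ≤ 2 * 3 ^ k - 2 ^ S by linarith)]
    have heq9 : (k : ℤ) * 3 ^ k * (2 * 3 ^ k) = 2 * (k : ℤ) * 9 ^ k := by rw [h9]; ring
    linarith
  · push_neg at hcase
    have hmul : a * 2 ^ S ≤ (2 * (k : ℤ) * 3 ^ k) * 2 ^ S := by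
      nlinarith [mul_pos ha (show (0:ℤ) < 2 ^ S - 2 * 3 ^ k by linarith)]
    have haux : a ≤ 2 * (k : ℤ) * 3 ^ k :=
      le_of_mul_le_mul_right hmul (by positivity)
    have h39 : (3 : ℤ) ^ k ≤ 9 ^ k := pow_le_pow_left₀ (by norm_num) (by norm_num) k
    nlinarith [mul_nonneg (show (0:ℤ) ≤ (k:ℤ) by positivity) (sub_nonneg.mpr h39)]
end
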